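/- arXiv:1104.5061 — 3 statements merged into one kernel-verified Lean document; each statement's English description precedes it below -/
import Mathlib

section
/- Let a > 0. Define m₁ = e^{a}/(1+e^{a})² and m₀ = a·e^{a}/(1+e^{a})² + 1/(1+e^{a}). Then for every z ∈ [−a, a]: m₁ z + m₀ ≤ 1/(1+e^{−z}). That is, the line through the point (−a, σ(−a)) with slope σ'(−a), where σ(z) = 1/(1+e^{−z}), lower-bounds the sigmoid function on the interval [−a, a]. -/
/-!
Write `σ` for the sigmoid. Its derivative is `σ' = σ (1 - σ)`; on `[-a, a]` the value `σ z` lies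
between `σ (-a) = 1 - σ a` and `σ a`, and `p (1 - p)` is smallest at the ends of such a
symmetric range, so `σ' ≥ σ' (-a)` on `[-a, a]`. By the mean value theorem, `σ` then stays
above its tangent line at `-a` on the whole interval.
-/

open Set

namespace Real

lemma sigmoid_mul_one_sub_le_of_abs_le {a t : ℝ} (ht : |t| ≤ a) :
    sigmoid a * (1 - sigmoid a) ≤ sigmoid t * (1 - sigmoid t) := by
  have hlow : 1 - sigmoid a ≤ sigmoid t := sigmoid_neg a ▸ sigmoid_le (neg_le_of_abs_le ht)
  have hupp : sigmoid t ≤ sigmoid a := sigmoid_le (le_of_abs_le ht)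
  nlinarith

lemma sigmoid_mul_one_sub_eq (a : ℝ) :
    sigmoid a * (1 - sigmoid a) = exp a / (1 + exp a) ^ 2 := by
  rw [← sigmoid_neg, ← neg_neg a, ← sigmoid_mul_rexp_neg (-a)]
  simp only [sigmoid_def, neg_neg]
  field_simp

lemma sigmoid_tangent_at_neg_le {a z : ℝ} (hz : z ∈ Icc (-a) a) :
    sigmoid (-a) + sigmoid a * (1 - sigmoid a) * (z + a) ≤ sigmoid z := by
  have hderiv : ∀ t ∈ interior (Icc (-a) a), sigmoid a * (1 - sigmoid a) ≤ deriv sigmoid t := by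
    rw [interior_Icc, deriv_sigmoid]
    exact fun t ht ↦ sigmoid_mul_one_sub_le_of_abs_le (abs_le.mpr ⟨ht.1.le, ht.2.le⟩)
  have := (convex_Icc (-a) a).mul_sub_le_image_sub_of_le_deriv continuous_sigmoid.continuousOn
    differentiable_sigmoid.differentiableOn hderiv (-a) ⟨le_rfl, hz.1.trans hz.2⟩ z hz hz.1
  rw [sub_neg_eq_add] at this
  linarith

end Real

theorem stmt_5_general (a : ℝ) :
    ∀ z ∈ Set.Icc (-a) a,
      (Real.exp a / (1 + Real.exp a) ^ 2) * z
          + (a * Real.exp a / (1 + Real.exp a) ^ 2 + 1 / (1 + Real.exp a))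
        ≤ 1 / (1 + Real.exp (-z)) := by
  intro z hz
  have htangent := Real.sigmoid_tangent_at_neg_le hz
  rw [Real.sigmoid_mul_one_sub_eq, Real.sigmoid_def, Real.sigmoid_def, neg_neg] at htangent
  rw [one_div, one_div, mul_div_assoc]
  linarith

/-- The tangent line of the logistic sigmoid `σ(z) = 1/(1+e^{-z})` at the left endpoint
`z = -a` lower-bounds the sigmoid on `[-a, a]`:
`m₁ z + m₀ ≤ 1/(1+e^{-z})` with `m₁ = e^a/(1+e^a)²` and `m₀ = a e^a/(1+e^a)² + 1/(1+e^a)`. -/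
theorem stmt_5 (a : ℝ) (ha : 0 < a) :
    ∀ z ∈ Set.Icc (-a) a,
      (Real.exp a / (1 + Real.exp a) ^ 2) * z
          + (a * Real.exp a / (1 + Real.exp a) ^ 2 + 1 / (1 + Real.exp a))
        ≤ 1 / (1 + Real.exp (-z)) :=
  stmt_5_general a
end

section
/- Let d, M be positive integers, M₁, M₂ > 0, C_g > 0, and x̃₁, …, x̃_M ∈ ℝ^d with ‖x̃_i‖₂ ≤ M₂. Let d_i ≥ 0 for i = 1, …, M. Define m₁ = e^{M₁M₂}/(1+e^{M₁M₂})², m₀ = M₁M₂·m₁ + 1/(1+e^{M₁M₂}), c̃ = m₁ Σ_{i=1}^M d_i x̃_i ∈ ℝ^d, and c̃₀ = m₀ Σ_{i=1}^M d_i. Assume C_g > c̃₀ and set c = c̃/(C_g − c̃₀). Then for every λ ∈ ℝ^d with ‖λ‖₂ ≤ M₁: if Σ_{i=1}^M d_i/(1+e^{−λ·x̃_i}) ≤ C_g, then c·λ ≤ 1. (This is the inclusion F₁ ⊆ F₂ of the paper.) -/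
/-!
Each `λ·x̃_i` lies in `[-s, s]` with `s = M₁M₂`. On that interval the sigmoid lies above its
tangent line at `-s`, whose slope is `σ'(-s) = σ'(s) = m₁` and whose value at `0` is `m₀`:
indeed `σ' = σ(1 - σ)` is smallest at the endpoints. Summing `d_i (m₁ λ·x̃_i + m₀) ≤ d_i σ(λ·x̃_i)`
gives `c̃·λ + c̃₀ ≤ C_g`, which is `c·λ ≤ 1` after dividing by `C_g - c̃₀ > 0`.
-/

open scoped RealInnerProductSpace

namespace Real

lemma sigmoid_mul_one_sub_sigmoid_le {s x : ℝ} (hx : |x| ≤ s) :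
    sigmoid s * (1 - sigmoid s) ≤ sigmoid x * (1 - sigmoid x) := by
  have hupper : sigmoid x ≤ sigmoid s := sigmoid_le (abs_le.1 hx).2
  have hlower : 1 - sigmoid s ≤ sigmoid x := by
    rw [← sigmoid_neg]; exact sigmoid_le (abs_le.1 hx).1
  nlinarith

lemma sigmoid_neg_add_tangent_le {s z : ℝ} (hz : |z| ≤ s) :
    sigmoid (-s) + sigmoid s * (1 - sigmoid s) * (z + s) ≤ sigmoid z := by
  set m := sigmoid s * (1 - sigmoid s)
  have hmono : MonotoneOn (fun x => sigmoid x - m * x) (Set.Icc (-s) s) := by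
    refine monotoneOn_of_hasDerivWithinAt_nonneg (convex_Icc _ _)
      (continuous_sigmoid.sub (continuous_const_mul m)).continuousOn
      (fun x _ => ((hasDerivAt_sigmoid x).sub ((hasDerivAt_id x).const_mul m)).hasDerivWithinAt)
      fun x hx => ?_
    rw [interior_Icc] at hx
    have := sigmoid_mul_one_sub_sigmoid_le (abs_le.2 ⟨hx.1.le, hx.2.le⟩)
    simp only [mul_one]
    linarith
  have hz' := abs_le.1 hz
  have := hmono ⟨le_rfl, by linarith⟩ hz' hz'.1
  simp only at this
  linarith

lemma sigmoid_mul_one_sub_sigmoid_eq (s : ℝ) :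
    sigmoid s * (1 - sigmoid s) = exp s / (1 + exp s) ^ 2 := by
  rw [← sigmoid_neg, sigmoid_def, sigmoid_def, neg_neg, exp_neg]
  field_simp
  ring

end Real

open Real in
theorem stmt_6_general (d M : ℕ) (M₁ M₂ C_g : ℝ)
    (xt : Fin M → EuclideanSpace ℝ (Fin d)) (hxt : ∀ i, ‖xt i‖ ≤ M₂)
    (dn : Fin M → ℝ) (hdn : ∀ i, 0 ≤ dn i)
    (m₁ m₀ ct₀ : ℝ) (ct c : EuclideanSpace ℝ (Fin d))
    (hm₁ : m₁ = Real.exp (M₁ * M₂) / (1 + Real.exp (M₁ * M₂)) ^ 2)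
    (hm₀ : m₀ = M₁ * M₂ * m₁ + 1 / (1 + Real.exp (M₁ * M₂)))
    (hct : ct = m₁ • ∑ i, dn i • xt i)
    (hct₀ : ct₀ = m₀ * ∑ i, dn i)
    (hCg' : ct₀ < C_g)
    (hc : c = (C_g - ct₀)⁻¹ • ct) :
    ∀ l : EuclideanSpace ℝ (Fin d), ‖l‖ ≤ M₁ →
      (∑ i, dn i / (1 + Real.exp (-⟪l, xt i⟫))) ≤ C_g → ⟪c, l⟫ ≤ 1 := by
  intro l hl hsum
  have htangent : ∀ i, m₁ * ⟪l, xt i⟫ + m₀ ≤ sigmoid ⟪l, xt i⟫ := fun i => by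
    have hbound : |⟪l, xt i⟫| ≤ M₁ * M₂ := (abs_real_inner_le_norm l (xt i)).trans <|
      mul_le_mul hl (hxt i) (norm_nonneg _) ((norm_nonneg l).trans hl)
    have := sigmoid_neg_add_tangent_le hbound
    rw [sigmoid_mul_one_sub_sigmoid_eq, sigmoid_def, neg_neg, ← one_div, ← hm₁] at this
    rw [hm₀]
    linarith
  have hlinear : ⟪ct, l⟫ + ct₀ ≤ C_g := calc
    ⟪ct, l⟫ + ct₀ = ∑ i, dn i * (m₁ * ⟪l, xt i⟫ + m₀) := by
      rw [hct, hct₀, real_inner_smul_left, sum_inner, Finset.mul_sum, Finset.mul_sum,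
        ← Finset.sum_add_distrib]
      refine Finset.sum_congr rfl fun i _ => ?_
      rw [real_inner_smul_left, real_inner_comm]
      ring
    _ ≤ ∑ i, dn i * sigmoid ⟪l, xt i⟫ :=
      Finset.sum_le_sum fun i _ => mul_le_mul_of_nonneg_left (htangent i) (hdn i)
    _ = ∑ i, dn i / (1 + Real.exp (-⟪l, xt i⟫)) := by simp only [sigmoid_def, div_eq_mul_inv]
    _ ≤ C_g := hsum
  rw [hc, real_inner_smul_left, inv_mul_le_one₀ (sub_pos.2 hCg')]
  linarith

/-- The inclusion `F₁ ⊆ F₂`: if `‖λ‖₂ ≤ M₁` and `Σ_i d_i/(1+e^{-λ·x̃_i}) ≤ C_g`, then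
`c·λ ≤ 1` where `c = c̃/(C_g - c̃₀)`, `c̃ = m₁ Σ_i d_i x̃_i`, `c̃₀ = m₀ Σ_i d_i`,
`m₁ = e^{M₁M₂}/(1+e^{M₁M₂})²` and `m₀ = M₁M₂ m₁ + 1/(1+e^{M₁M₂})`. -/
theorem stmt_6 (d M : ℕ) (hd : 0 < d) (hM : 0 < M) (M₁ M₂ C_g : ℝ)
    (hM₁ : 0 < M₁) (hM₂ : 0 < M₂) (hCg : 0 < C_g)
    (xt : Fin M → EuclideanSpace ℝ (Fin d)) (hxt : ∀ i, ‖xt i‖ ≤ M₂)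
    (dn : Fin M → ℝ) (hdn : ∀ i, 0 ≤ dn i)
    (m₁ m₀ ct₀ : ℝ) (ct c : EuclideanSpace ℝ (Fin d))
    (hm₁ : m₁ = Real.exp (M₁ * M₂) / (1 + Real.exp (M₁ * M₂)) ^ 2)
    (hm₀ : m₀ = M₁ * M₂ * m₁ + 1 / (1 + Real.exp (M₁ * M₂)))
    (hct : ct = m₁ • ∑ i, dn i • xt i)
    (hct₀ : ct₀ = m₀ * ∑ i, dn i)
    (hCg' : ct₀ < C_g)
    (hc : c = (C_g - ct₀)⁻¹ • ct) :
    ∀ l : EuclideanSpace ℝ (Fin d), ‖l‖ ≤ M₁ →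
      (∑ i, dn i / (1 + Real.exp (-⟪l, xt i⟫))) ≤ C_g → ⟪c, l⟫ ≤ 1 :=
  stmt_6_general d M M₁ M₂ C_g xt hxt dn hdn m₁ m₀ ct₀ ct c hm₁ hm₀ hct hct₀ hCg' hc
end

section
/- Let d be a positive integer, M₁, M₂, ε > 0, and c ∈ ℝ^d nonzero with ‖c‖₂^{−1} = z. Let H_z = {λ ∈ ℝ^d : c·λ ≤ 1}. Then there exists an (ε/M₂)-cover (in the Euclidean norm) of B_{M₁} ∩ H_z of cardinality at most (Vol(B_{M₁ + ε/(2M₂)} ∩ H_{z + ε/(2M₂)}) / Vol(B_{M₁ + ε/(2M₂)})) · (2M₁M₂/ε + 1)^d, where H_{z + ε/(2M₂)} = {λ : c'·λ ≤ 1} is the parallel half-space whose bounding hyperplane is at distance z + ε/(2M₂) from the origin (c' = c·z/(z + ε/(2M₂))), and Vol denotes Lebesgue measure on ℝ^d. -/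
open scoped RealInnerProductSpace NNReal ENNReal
open MeasureTheory Metric

/-!
A maximal `ε/M₂`-separated subset of `B_{M₁} ∩ H_z` is an `ε/M₂`-cover of it. The closed balls of
radius `r = ε/(2M₂)` around its points are pairwise disjoint, and they lie in
`B_{M₁+r} ∩ H_{z+r}` because moving by `r` raises `⟪c, ·⟫` by at most `r‖c‖ = r/z`. Comparing
volumes bounds the number of points by `Vol(B_{M₁+r} ∩ H_{z+r}) / Vol(B_r)`, which is the claimed
volume ratio times `((M₁+r)/r)^d`.
-/

namespace Metric

theorem exists_finset_isCover_card_le {X : Type*} [PseudoEMetricSpace X] {ε : ℝ≥0} {A : Set X}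
    {N : ℝ} (h : ∀ C : Finset X, ↑C ⊆ A → IsSeparated ε (C : Set X) → (C.card : ℝ) ≤ N) :
    ∃ U : Finset X, IsCover ε A U ∧ (U.card : ℝ) ≤ N := by
  have hN : 0 ≤ N := by simpa using h ∅ (by simp) (by simp)
  have hpacking : packingNumber ε A ≤ ⌊N⌋₊ := by
    refine iSup₂_le fun C hCA => iSup_le fun hC => ?_
    by_contra! hlt
    obtain ⟨D, hDC, hD⟩ := Set.exists_subset_encard_eq (Order.add_one_le_of_lt hlt)
    have hDfin : D.Finite := Set.finite_of_encard_eq_coe hD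
    have hcard := h hDfin.toFinset (by simpa using hDC.trans hCA) (by simpa using hC.subset hDC)
    rw [← Set.ncard_eq_toFinset_card D hDfin, Set.ncard_def, hD, ← Nat.cast_add_one,
      ENat.toNat_natCast] at hcard
    push_cast at hcard
    linarith [Nat.lt_floor_add_one N]
  have hcovering := (coveringNumber_le_packingNumber ε A).trans hpacking
  obtain ⟨C, -, hCfin, hC, hCcard⟩ :=
    exists_set_encard_eq_coveringNumber (hcovering.trans_lt (ENat.natCast_lt_top _)).ne
  refine ⟨hCfin.toFinset, by simpa using hC, ?_⟩
  have hcard : hCfin.toFinset.card ≤ ⌊N⌋₊ := by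
    rw [← ENat.natCast_le_natCast, ← hCfin.encard_eq_coe_toFinset_card, hCcard]
    exact hcovering
  exact (Nat.cast_le.mpr hcard).trans (Nat.floor_le hN)

end Metric

section Packing

variable {E : Type*} [NormedAddCommGroup E] [MeasurableSpace E] [BorelSpace E]
  (μ : Measure E) [μ.IsAddHaarMeasure] {C : Finset E} {r : ℝ≥0} {A : Set E}

theorem Finset.card_mul_measure_closedBall_le (hC : IsSeparated ↑(2 * r) (C : Set E))
    (hA : ∀ c ∈ C, closedBall c r ⊆ A) : C.card * μ (closedBall 0 r) ≤ μ A := by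
  have hdisj : (C : Set E).PairwiseDisjoint fun c => closedBall c r := by
    intro x hx y hy hxy
    refine closedBall_disjoint_closedBall ?_
    have : ((2 * r : ℝ≥0) : ℝ≥0∞) < edist x y := hC hx hy hxy
    rw [edist_nndist, ENNReal.coe_lt_coe, ← NNReal.coe_lt_coe, coe_nndist] at this
    push_cast at this
    linarith
  calc C.card * μ (closedBall 0 r) = ∑ c ∈ C, μ (closedBall c r) := by
        simp [Measure.addHaar_closedBall_center]
    _ = μ (⋃ c ∈ C, closedBall c r) :=
        (measure_biUnion_finset hdisj fun _ _ => measurableSet_closedBall).symm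
    _ ≤ μ A := measure_mono (Set.iUnion₂_subset hA)

theorem Finset.card_le_measureReal_div_mul_pow [NormedSpace ℝ E] [FiniteDimensional ℝ E]
    (hC : IsSeparated ↑(2 * r) (C : Set E)) (hA : ∀ c ∈ C, closedBall c r ⊆ A)
    (hAfin : μ A ≠ ⊤) (hr : 0 < r) {R : ℝ} (hR : 0 < R) :
    (C.card : ℝ) ≤ μ.real A / μ.real (closedBall 0 R) * (R / r) ^ Module.finrank ℝ E := by
  have hV : 0 < μ.real (ball (0 : E) 1) :=
    ENNReal.toReal_pos (measure_ball_pos μ _ one_pos).ne' measure_ball_lt_top.ne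
  have hpacking := ENNReal.toReal_mono hAfin (C.card_mul_measure_closedBall_le μ hC hA)
  rw [ENNReal.toReal_mul, ← measureReal_def, ← measureReal_def,
    Measure.addHaar_real_closedBall μ _ r.coe_nonneg, ENNReal.toReal_natCast] at hpacking
  have hr' : (0 : ℝ) < r := hr
  rw [Measure.addHaar_real_closedBall μ _ hR.le, div_pow]
  calc (C.card : ℝ) ≤ μ.real A / (r ^ Module.finrank ℝ E * μ.real (ball 0 1)) :=
        (le_div_iff₀ (by positivity)).mpr hpacking
    _ = _ := by field_simp

end Packing

theorem inner_smul_le_one_of_dist_le {F : Type*} [NormedAddCommGroup F] [InnerProductSpace ℝ F]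
    {c u y : F} {r : ℝ} (hr : 0 ≤ r) (hu : ⟪c, u⟫ ≤ 1) (hy : dist y u ≤ r) :
    ⟪(‖c‖⁻¹ / (‖c‖⁻¹ + r)) • c, y⟫ ≤ 1 := by
  rcases eq_or_ne c 0 with rfl | hc
  · simp
  have hcy : ⟪c, y⟫ ≤ 1 + ‖c‖ * r :=
    calc ⟪c, y⟫ = ⟪c, u⟫ + ⟪c, y - u⟫ := by rw [inner_sub_right]; ring
      _ ≤ 1 + ‖c‖ * ‖y - u‖ := add_le_add hu (real_inner_le_norm _ _)
      _ ≤ 1 + ‖c‖ * r := by rw [← dist_eq_norm]; gcongr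
  have hcoef : ‖c‖⁻¹ / (‖c‖⁻¹ + r) = (1 + ‖c‖ * r)⁻¹ := by
    have : 0 < ‖c‖ := norm_pos_iff.mpr hc
    field_simp
  rw [hcoef, real_inner_smul_left, inv_mul_le_iff₀ (by positivity)]
  linarith

section BallInterHalfSpace

variable {E : Type*} [NormedAddCommGroup E] [InnerProductSpace ℝ E]

theorem closedBall_subset_ball_inter_halfSpace {c a : E} {M r : ℝ} (hr : 0 ≤ r) (ha : ‖a‖ ≤ M)
    (hca : ⟪c, a⟫ ≤ 1) :
    closedBall a r ⊆ {l | ‖l‖ ≤ M + r ∧ ⟪(‖c‖⁻¹ / (‖c‖⁻¹ + r)) • c, l⟫ ≤ 1} := fun l hl =>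
  ⟨by linarith [norm_le_of_mem_closedBall hl], inner_smul_le_one_of_dist_le hr hca hl⟩

theorem exists_finset_isCover_ball_inter_halfSpace [FiniteDimensional ℝ E] [MeasurableSpace E]
    [BorelSpace E] (μ : Measure E) [μ.IsAddHaarMeasure] (c : E) {M : ℝ} (hM : 0 ≤ M) {r : ℝ≥0}
    (hr : 0 < r) :
    ∃ U : Finset E, IsCover (2 * r) {a | ‖a‖ ≤ M ∧ ⟪c, a⟫ ≤ 1} U ∧
      (U.card : ℝ) ≤ μ.real {l | ‖l‖ ≤ M + r ∧ ⟪(‖c‖⁻¹ / (‖c‖⁻¹ + r)) • c, l⟫ ≤ 1} /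
        μ.real (closedBall 0 (M + r)) * ((M + r) / r) ^ Module.finrank ℝ E := by
  refine exists_finset_isCover_card_le fun C hC hCsep => ?_
  refine C.card_le_measureReal_div_mul_pow μ hCsep
    (fun a ha => closedBall_subset_ball_inter_halfSpace r.coe_nonneg (hC ha).1 (hC ha).2) ?_ hr
    (by positivity)
  exact ((measure_mono fun l hl => mem_closedBall_zero_iff.mpr hl.1).trans_lt
    measure_closedBall_lt_top).ne

end BallInterHalfSpace

theorem stmt_9_general (d : ℕ) (M₁ M₂ ε : ℝ) (hM₁ : 0 < M₁) (hM₂ : 0 < M₂)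
    (hε : 0 < ε) (c : EuclideanSpace ℝ (Fin d)) (z : ℝ) (hz : ‖c‖⁻¹ = z) :
    ∃ U : Finset (EuclideanSpace ℝ (Fin d)),
      (∀ a : EuclideanSpace ℝ (Fin d), ‖a‖ ≤ M₁ → ⟪c, a⟫ ≤ 1 → ∃ u ∈ U, ‖a - u‖ ≤ ε / M₂) ∧
      (U.card : ℝ) ≤
        ((MeasureTheory.volume {l : EuclideanSpace ℝ (Fin d) |
            ‖l‖ ≤ M₁ + ε / (2 * M₂) ∧ ⟪(z / (z + ε / (2 * M₂))) • c, l⟫ ≤ 1}).toReal /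
          (MeasureTheory.volume {l : EuclideanSpace ℝ (Fin d) |
            ‖l‖ ≤ M₁ + ε / (2 * M₂)}).toReal) * (2 * M₁ * M₂ / ε + 1) ^ d := by
  subst hz
  let r : ℝ≥0 := ⟨ε / (2 * M₂), by positivity⟩
  have hr_def : (r : ℝ) = ε / (2 * M₂) := rfl
  have h2r : ((2 * r : ℝ≥0) : ℝ) = ε / M₂ := by
    rw [NNReal.coe_mul, NNReal.coe_ofNat, hr_def]
    field_simp
  have hratio : 2 * M₁ * M₂ / ε + 1 = (M₁ + r) / r := by
    rw [hr_def]
    field_simp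
  have hball : {l : EuclideanSpace ℝ (Fin d) | ‖l‖ ≤ M₁ + r} = closedBall 0 (M₁ + r) := by
    ext; simp
  have hr : 0 < r := NNReal.coe_pos.mp (by rw [hr_def]; positivity)
  obtain ⟨U, hUcover, hUcard⟩ := exists_finset_isCover_ball_inter_halfSpace volume c hM₁.le hr
  rw [hratio, ← h2r, ← hr_def, ← measureReal_def, ← measureReal_def, hball]
  refine ⟨U, fun a ha hca => ?_, by simpa only [finrank_euclideanSpace_fin] using hUcard⟩
  obtain ⟨u, hu, hau⟩ := Set.mem_iUnion₂.mp (hUcover.subset_iUnion_closedBall ⟨ha, hca⟩)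
  exact ⟨u, hu, dist_eq_norm a u ▸ hau⟩

/-- Covering number of a ball intersected with a half-space: `B_{M₁} ∩ H_z`, where
`H_z = {λ : c·λ ≤ 1}` has bounding hyperplane at distance `z = ‖c‖₂⁻¹` from the origin,
admits an `(ε/M₂)`-cover of cardinality at most the volume ratio
`Vol(B_{M₁+ε/(2M₂)} ∩ H_{z+ε/(2M₂)}) / Vol(B_{M₁+ε/(2M₂)})` times `(2M₁M₂/ε + 1)^d`,
where `H_{z+ε/(2M₂)} = {λ : c'·λ ≤ 1}` with `c' = (z/(z+ε/(2M₂))) • c`. -/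
theorem stmt_9 (d : ℕ) (hd : 0 < d) (M₁ M₂ ε : ℝ) (hM₁ : 0 < M₁) (hM₂ : 0 < M₂)
    (hε : 0 < ε) (c : EuclideanSpace ℝ (Fin d)) (hc : c ≠ 0) (z : ℝ) (hz : ‖c‖⁻¹ = z) :
    ∃ U : Finset (EuclideanSpace ℝ (Fin d)),
      (∀ a : EuclideanSpace ℝ (Fin d), ‖a‖ ≤ M₁ → ⟪c, a⟫ ≤ 1 → ∃ u ∈ U, ‖a - u‖ ≤ ε / M₂) ∧
      (U.card : ℝ) ≤
        ((MeasureTheory.volume {l : EuclideanSpace ℝ (Fin d) |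
            ‖l‖ ≤ M₁ + ε / (2 * M₂) ∧ ⟪(z / (z + ε / (2 * M₂))) • c, l⟫ ≤ 1}).toReal /
          (MeasureTheory.volume {l : EuclideanSpace ℝ (Fin d) |
            ‖l‖ ≤ M₁ + ε / (2 * M₂)}).toReal) * (2 * M₁ * M₂ / ε + 1) ^ d :=
  stmt_9_general d M₁ M₂ ε hM₁ hM₂ hε c z hz
end
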